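/- With ρ(δ) = (1/(2J₂(2))) e^{−3|δ|/2} J₁(2e^{−|δ|/2}) and g(δ) = (1/4)(8 + 4δ − e^{δ}(5−2δ)) for δ < 0, g(δ) = (1/4)(4 − e^{−δ}) for δ ≥ 0, one has ∫_ℝ ρ(δ) g(δ) dδ = 3/2 − J₁(2)/(2J₂(2)). -/

import Mathlib

/-!
Expanding `J₁(2e^{-|δ|/2})` in its power series writes `ρ(δ) g(δ)` as
`∑ₘ aₘ e^{-(m+2)|δ|} g(δ) / (2 J₂(2))` with `aₘ = (-1)ᵐ / (m! (m+1)!)`; the terms are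
dominated by `e^{-|δ|} / m!`, so the series may be integrated termwise. Each term is an
elementary integral, a rational function of `m`, and the resulting series splits into
`3 ∑ aₘ / (m+2) - ∑ aₘ = 3 J₂(2) - J₁(2)` plus a telescoping series with sum `0`.
-/

open Real MeasureTheory

/-- The Bessel function of the first kind of integer order `n`. -/
noncomputable def besselJ (n : ℕ) (x : ℝ) : ℝ :=
  ∑' m : ℕ, (-1 : ℝ) ^ m / (m.factorial * (m + n).factorial) * (x / 2) ^ (2 * m + n)

/-- The stationary density of the difference chain. -/
noncomputable def ρstat (d : ℝ) : ℝ :=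
  (1 / (2 * besselJ 2 2)) * exp (-(3 * |d| / 2)) * besselJ 1 (2 * exp (-(|d| / 2)))

/-- The conditional expected one-step growth. -/
noncomputable def gstep (δ : ℝ) : ℝ :=
  if δ < 0 then (1 / 4) * (8 + 4 * δ - exp δ * (5 - 2 * δ))
  else (1 / 4) * (4 - exp (-δ))

open Filter Set Topology Nat

section Reflection

variable {E : Type*} [NormedAddCommGroup E] {f : ℝ → E}

lemma integrableOn_Iic_of_integrableOn_Ioi_comp_neg
    (h : IntegrableOn (fun x => f (-x)) (Ioi 0)) : IntegrableOn f (Iic 0) := by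
  rw [integrableOn_Iic_iff_integrableOn_Iio]
  simpa using (show IntegrableOn (fun x => f (-x)) (Ioi (-0)) by simpa using h).comp_neg_Iio

lemma integrable_of_integrableOn_Ioi_of_comp_neg (h₁ : IntegrableOn f (Ioi 0))
    (h₂ : IntegrableOn (fun x => f (-x)) (Ioi 0)) : Integrable f := by
  rw [← integrableOn_univ, ← Iic_union_Ioi (a := (0 : ℝ)), integrableOn_union]
  exact ⟨integrableOn_Iic_of_integrableOn_Ioi_comp_neg h₂, h₁⟩

lemma integral_eq_integral_Ioi_add_comp_neg [NormedSpace ℝ E] (h₁ : IntegrableOn f (Ioi 0))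
    (h₂ : IntegrableOn (fun x => f (-x)) (Ioi 0)) :
    ∫ x, f x = ∫ x in Ioi 0, (f x + f (-x)) := by
  rw [integral_add h₁ h₂, integral_comp_neg_Ioi, neg_zero, add_comm,
    intervalIntegral.integral_Iic_add_Ioi (integrableOn_Iic_of_integrableOn_Ioi_comp_neg h₂) h₁]

end Reflection

section ExpIntegrals

variable {k : ℝ}

lemma hasDerivAt_exp_neg_mul_antideriv (hk : k ≠ 0) (x : ℝ) :
    HasDerivAt (fun x => -(x / k + 1 / k ^ 2) * exp (-(k * x))) (x * exp (-(k * x))) x := by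
  refine ((((hasDerivAt_id' x).div_const k).add_const (1 / k ^ 2)).neg.mul
    (((hasDerivAt_id' x).const_mul k).neg.exp)).congr_deriv ?_
  simp only [Pi.neg_apply]
  field_simp
  ring

lemma tendsto_exp_neg_mul_antideriv (hk : 0 < k) :
    Tendsto (fun x => -(x / k + 1 / k ^ 2) * exp (-(k * x))) atTop (𝓝 0) := by
  have hlin : Tendsto (fun x => k * x) atTop atTop := tendsto_id.const_mul_atTop hk
  have hexp : Tendsto (fun x => exp (-(k * x))) atTop (𝓝 0) :=
    tendsto_exp_neg_atTop_nhds_zero.comp hlin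
  have hmul : Tendsto (fun x => k * x * exp (-(k * x))) atTop (𝓝 0) := by
    simpa [Function.comp_def] using (tendsto_pow_mul_exp_neg_atTop_nhds_zero 1).comp hlin
  convert (hmul.const_mul (-1 / k ^ 2)).add (hexp.const_mul (-1 / k ^ 2)) using 2
  · field_simp
    ring
  · simp

lemma integrableOn_Ioi_mul_exp_neg_mul (hk : 0 < k) :
    IntegrableOn (fun x => x * exp (-(k * x))) (Ioi 0) :=
  integrableOn_Ioi_deriv_of_nonneg' (fun x _ => hasDerivAt_exp_neg_mul_antideriv hk.ne' x)
    (fun _ hx => mul_nonneg (le_of_lt hx) (exp_pos _).le) (tendsto_exp_neg_mul_antideriv hk)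

lemma integral_Ioi_mul_exp_neg_mul (hk : 0 < k) :
    ∫ x in Ioi 0, x * exp (-(k * x)) = 1 / k ^ 2 := by
  rw [integral_Ioi_of_hasDerivAt_of_nonneg' (fun x _ => hasDerivAt_exp_neg_mul_antideriv hk.ne' x)
    (fun _ hx => mul_nonneg (le_of_lt hx) (exp_pos _).le) (tendsto_exp_neg_mul_antideriv hk)]
  simp

lemma integrableOn_Ioi_exp_neg_mul (hk : 0 < k) :
    IntegrableOn (fun x => exp (-(k * x))) (Ioi 0) := by
  simpa using exp_neg_integrableOn_Ioi 0 hk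

lemma integrableOn_Ioi_affine_mul_exp_neg_mul (a b : ℝ) (hk : 0 < k) :
    IntegrableOn (fun x => (a + b * x) * exp (-(k * x))) (Ioi 0) := by
  simp_rw [add_mul, mul_assoc]
  exact ((integrableOn_Ioi_exp_neg_mul hk).const_mul a).add
    ((integrableOn_Ioi_mul_exp_neg_mul hk).const_mul b)

lemma integral_Ioi_affine_mul_exp_neg_mul (a b : ℝ) (hk : 0 < k) :
    ∫ x in Ioi 0, (a + b * x) * exp (-(k * x)) = a / k + b / k ^ 2 := by
  have hexp : ∫ x in Ioi 0, exp (-(k * x)) = 1 / k := by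
    simpa [neg_mul] using integral_exp_mul_Ioi (neg_neg_of_pos hk) 0
  simp_rw [add_mul, mul_assoc]
  rw [integral_add, integral_const_mul, integral_const_mul, hexp, integral_Ioi_mul_exp_neg_mul hk]
  · ring
  · exact (integrableOn_Ioi_exp_neg_mul hk).const_mul a
  · exact (integrableOn_Ioi_mul_exp_neg_mul hk).const_mul b

end ExpIntegrals

lemma integrable_exp_neg_abs : Integrable fun x : ℝ => exp (-|x|) := by
  have h : IntegrableOn (fun x : ℝ => exp (-|x|)) (Ioi 0) :=
    (integrableOn_Ioi_exp_neg_mul one_pos).congr_fun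
      (fun x (hx : 0 < x) => by simp [abs_of_pos hx]) measurableSet_Ioi
  exact integrable_of_integrableOn_Ioi_of_comp_neg h (by simpa using h)

lemma summable_inv_factorial : Summable fun m : ℕ => (m ! : ℝ)⁻¹ := by
  simpa using Real.summable_pow_div_factorial 1

noncomputable def besselCoeff (n m : ℕ) : ℝ := (-1) ^ m / (m ! * (m + n)!)

lemma abs_besselCoeff_le (n m : ℕ) : |besselCoeff n m| ≤ (m ! : ℝ)⁻¹ := by
  have hmn : (1 : ℝ) ≤ (m + n)! := by exact_mod_cast (m + n).factorial_pos
  rw [besselCoeff, abs_div, abs_pow, abs_neg, abs_one, one_pow, abs_of_pos (by positivity),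
    one_div, mul_inv]
  exact mul_le_of_le_one_right (by positivity) (inv_le_one_of_one_le₀ hmn)

lemma summable_besselCoeff_mul (n : ℕ) {f : ℕ → ℝ} {C : ℝ} (hf : ∀ m, |f m| ≤ C) :
    Summable fun m => besselCoeff n m * f m := by
  refine .of_norm_bounded (summable_inv_factorial.mul_right C) fun m => ?_
  rw [Real.norm_eq_abs, abs_mul]
  exact mul_le_mul (abs_besselCoeff_le n m) (hf m) (abs_nonneg _) (by positivity)

lemma hasSum_besselJ (n : ℕ) (x : ℝ) :
    HasSum (fun m => besselCoeff n m * (x / 2) ^ (2 * m + n)) (besselJ n x) := by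
  have hsum : Summable fun m => besselCoeff n m * (x / 2) ^ (2 * m + n) := by
    refine .of_norm_bounded ((Real.summable_pow_div_factorial (|x / 2| ^ 2)).mul_left
      (|x / 2| ^ n)) fun m => ?_
    rw [Real.norm_eq_abs, abs_mul, abs_pow, pow_add, pow_mul]
    calc |besselCoeff n m| * ((|x / 2| ^ 2) ^ m * |x / 2| ^ n)
        ≤ (m ! : ℝ)⁻¹ * ((|x / 2| ^ 2) ^ m * |x / 2| ^ n) :=
          mul_le_mul_of_nonneg_right (abs_besselCoeff_le n m) (by positivity)
      _ = |x / 2| ^ n * ((|x / 2| ^ 2) ^ m / m !) := by ring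
  simpa [besselJ, besselCoeff] using hsum.hasSum

lemma hasSum_besselCoeff (n : ℕ) : HasSum (besselCoeff n) (besselJ n 2) := by
  simpa using hasSum_besselJ n 2

lemma besselCoeff_succ (n m : ℕ) :
    besselCoeff n (m + 1) = -besselCoeff n m / ((m + 1) * (m + n + 1)) := by
  rw [besselCoeff, besselCoeff, add_right_comm, factorial_succ, factorial_succ]
  push_cast
  field_simp
  ring

lemma besselCoeff_succ_order (n m : ℕ) :
    besselCoeff (n + 1) m = besselCoeff n m / (m + n + 1) := by
  rw [besselCoeff, besselCoeff, ← add_assoc, factorial_succ]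
  push_cast
  field_simp

lemma besselJ_two_two_pos : 0 < besselJ 2 2 := by
  have hanti : Antitone fun m : ℕ => ((m ! * (m + 2)! : ℕ) : ℝ)⁻¹ :=
    antitone_nat_of_succ_le fun m => inv_anti₀ (by positivity) <| Nat.cast_le.mpr <|
      Nat.mul_le_mul (factorial_le m.le_succ) (factorial_le (by omega))
  have hpartial := hanti.alternating_series_le_tendsto (l := besselJ 2 2) (by
    simpa [besselCoeff, div_eq_mul_inv] using (hasSum_besselCoeff 2).tendsto_sum_nat) 1
  norm_num [Finset.sum_range_succ, factorial] at hpartial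
  linarith

lemma hasSum_besselCoeff_one_mul :
    HasSum (fun m : ℕ => besselCoeff 1 m * (3 / (m + 2) - 1 / (m + 2) ^ 2
      - 3 / (2 * (m + 2 + 1)) - 1 / (2 * (m + 2 + 1) ^ 2))) (3 * besselJ 2 2 - besselJ 1 2) := by
  -- `u` absorbs the `(m + 3)`-denominators via `aₘ₊₁ = -aₘ / ((m + 1) (m + 2))`;
  -- it vanishes at `0`, so the telescoping series sums to `0`.
  set u : ℕ → ℝ := fun m => besselCoeff 1 m * (m * (m + 5 / 2) / (m + 2) ^ 2) with hu_def
  have hu : Summable u := summable_besselCoeff_mul 1 (C := 1) fun m => by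
    rw [abs_of_nonneg (by positivity), div_le_one (by positivity)]
    nlinarith
  have htelescope : HasSum (fun m => u m - u (m + 1)) 0 := by
    simpa [hu_def] using hu.hasSum.sub ((hasSum_nat_add_iff' 1).mpr hu.hasSum)
  have hsum := (((hasSum_besselCoeff 2).mul_left 3).sub (hasSum_besselCoeff 1)).add htelescope
  rw [add_zero] at hsum
  have hterm (m : ℕ) : besselCoeff 1 m * (3 / (m + 2) - 1 / (m + 2) ^ 2
      - 3 / (2 * (m + 2 + 1)) - 1 / (2 * (m + 2 + 1) ^ 2))
      = 3 * besselCoeff 2 m - besselCoeff 1 m + (u m - u (m + 1)) := by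
    simp only [hu_def, besselCoeff_succ_order 1, besselCoeff_succ 1]
    push_cast
    field_simp
    ring
  simp_rw [hterm]
  exact hsum

lemma measurable_gstep : Measurable gstep :=
  Measurable.ite measurableSet_Iio (by fun_prop) (by fun_prop)

lemma abs_gstep_le (δ : ℝ) : |gstep δ| ≤ 4 * exp |δ| := by
  have hlin : 4 + 4 * |δ| ≤ 4 * exp |δ| := by linarith [add_one_le_exp |δ|]
  refine le_trans ?_ hlin
  unfold gstep
  split_ifs with h
  · have h0 : exp δ ≤ 1 := exp_le_one_iff.mpr h.le
    rw [abs_of_neg h, abs_le]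
    constructor <;> nlinarith [exp_pos δ]
  · have h0 : exp (-δ) ≤ 1 := exp_le_one_iff.mpr (by linarith)
    rw [abs_of_nonneg (not_lt.mp h), abs_le]
    constructor <;> nlinarith [exp_pos (-δ)]

lemma integral_exp_neg_mul_abs_mul_gstep {k : ℝ} (hk : 0 < k) :
    ∫ δ, exp (-(k * |δ|)) * gstep δ
      = 3 / k - 1 / k ^ 2 - 3 / (2 * (k + 1)) - 1 / (2 * (k + 1) ^ 2) := by
  have hk1 : 0 < k + 1 := by linarith
  have hpos : EqOn (fun δ => exp (-(k * |δ|)) * gstep δ)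
      (fun x => exp (-(k * x)) - 1 / 4 * exp (-((k + 1) * x))) (Ioi 0) := by
    intro x (hx : 0 < x)
    simp only [gstep, abs_of_pos hx, if_neg (not_lt.mpr hx.le)]
    rw [show -((k + 1) * x) = -(k * x) + -x by ring, exp_add]
    ring
  have hneg : EqOn (fun δ => exp (-(k * |-δ|)) * gstep (-δ))
      (fun x => (2 + -1 * x) * exp (-(k * x)) - (5 / 4 + 1 / 2 * x) * exp (-((k + 1) * x)))
      (Ioi 0) := by
    intro x (hx : 0 < x)
    simp only [gstep, abs_neg, abs_of_pos hx, if_pos (neg_lt_zero.mpr hx)]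
    rw [show -((k + 1) * x) = -(k * x) + -x by ring, exp_add]
    ring
  have hf_pos := ((integrableOn_Ioi_exp_neg_mul hk).sub
    ((integrableOn_Ioi_exp_neg_mul hk1).const_mul _)).congr_fun hpos.symm measurableSet_Ioi
  have hf_neg := ((integrableOn_Ioi_affine_mul_exp_neg_mul _ _ hk).sub
    (integrableOn_Ioi_affine_mul_exp_neg_mul _ _ hk1)).congr_fun hneg.symm measurableSet_Ioi
  rw [integral_eq_integral_Ioi_add_comp_neg hf_pos hf_neg,
    setIntegral_congr_fun (g := fun x => (3 + -1 * x) * exp (-(k * x))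
      - (3 / 2 + 1 / 2 * x) * exp (-((k + 1) * x))) measurableSet_Ioi fun x hx => by
        simp only [hpos hx, hneg hx]
        ring,
    integral_sub (integrableOn_Ioi_affine_mul_exp_neg_mul _ _ hk)
      (integrableOn_Ioi_affine_mul_exp_neg_mul _ _ hk1),
    integral_Ioi_affine_mul_exp_neg_mul _ _ hk, integral_Ioi_affine_mul_exp_neg_mul _ _ hk1]
  field_simp
  ring

lemma hasSum_ρstat_mul_gstep (δ : ℝ) :
    HasSum (fun m : ℕ => besselCoeff 1 m / (2 * besselJ 2 2) *
      (exp (-((m + 2) * |δ|)) * gstep δ)) (ρstat δ * gstep δ) := by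
  have h := ((hasSum_besselJ 1 (2 * exp (-(|δ| / 2)))).mul_left
    ((1 / (2 * besselJ 2 2)) * exp (-(3 * |δ| / 2)))).mul_right (gstep δ)
  have hterm (m : ℕ) : 1 / (2 * besselJ 2 2) * exp (-(3 * |δ| / 2)) *
      (besselCoeff 1 m * (2 * exp (-(|δ| / 2)) / 2) ^ (2 * m + 1)) * gstep δ
      = besselCoeff 1 m / (2 * besselJ 2 2) * (exp (-((m + 2) * |δ|)) * gstep δ) := by
    rw [mul_div_cancel_left₀ _ two_ne_zero, ← exp_nat_mul]
    have hexp : exp (-(3 * |δ| / 2)) * exp ((2 * m + 1 : ℕ) * -(|δ| / 2))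
        = exp (-((m + 2) * |δ|)) := by
      rw [← exp_add]
      push_cast
      ring_nf
    linear_combination (besselCoeff 1 m / (2 * besselJ 2 2) * gstep δ) * hexp
  rw [funext hterm] at h
  exact h

lemma abs_exp_neg_mul_abs_mul_gstep_le {k : ℝ} (hk : 2 ≤ k) (δ : ℝ) :
    |exp (-(k * |δ|)) * gstep δ| ≤ 4 * exp (-|δ|) := by
  have hexp : exp (-(k * |δ|)) * exp |δ| ≤ exp (-|δ|) := by
    rw [← exp_add, exp_le_exp]
    nlinarith [abs_nonneg δ]
  rw [abs_mul, abs_of_pos (exp_pos _)]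
  calc exp (-(k * |δ|)) * |gstep δ| ≤ exp (-(k * |δ|)) * (4 * exp |δ|) := by
        gcongr
        exact abs_gstep_le δ
    _ ≤ 4 * exp (-|δ|) := by linarith

lemma hasSum_integral_ρstat_mul_gstep :
    HasSum (fun m : ℕ => besselCoeff 1 m / (2 * besselJ 2 2) *
      ∫ δ, exp (-((m + 2) * |δ|)) * gstep δ) (∫ δ, ρstat δ * gstep δ) := by
  simp_rw [← integral_const_mul]
  refine hasSum_integral_of_dominated_convergence
    (fun m δ => (m ! : ℝ)⁻¹ * (|(2 * besselJ 2 2)⁻¹| * (4 * exp (-|δ|))))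
    (fun m => by have := measurable_gstep; fun_prop) (fun m => ae_of_all _ fun δ => ?_)
    (ae_of_all _ fun δ => summable_inv_factorial.mul_right _) ?_
    (ae_of_all _ hasSum_ρstat_mul_gstep)
  · rw [Real.norm_eq_abs, abs_mul, abs_div, div_eq_mul_inv, ← abs_inv, mul_assoc]
    gcongr
    · exact abs_besselCoeff_le 1 m
    · exact abs_exp_neg_mul_abs_mul_gstep_le (by linarith [m.cast_nonneg (α := ℝ)]) δ
  · simp_rw [tsum_mul_right]
    exact ((integrable_exp_neg_abs.const_mul _).const_mul _).const_mul _

/-- The percolation rate `χ = 3/2 − J₁(2)/(2J₂(2))` as an integral. -/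
theorem percolation_rate_integral :
    ∫ δ : ℝ, ρstat δ * gstep δ = 3 / 2 - besselJ 1 2 / (2 * besselJ 2 2) := by
  have hJ : besselJ 2 2 ≠ 0 := besselJ_two_two_pos.ne'
  have hterm (m : ℕ) := integral_exp_neg_mul_abs_mul_gstep (k := m + 2) (by positivity)
  have h := hasSum_integral_ρstat_mul_gstep
  simp_rw [hterm, div_mul_eq_mul_div] at h
  rw [h.unique (hasSum_besselCoeff_one_mul.div_const _)]
  field_simp
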